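/- Let 0 < γ < 1 and t > 0. Then the Caputo fractional derivative of order γ of sin(πt) is given by the absolutely convergent series (1/Γ(1−γ)) ∫₀ᵗ π cos(πτ) (t−τ)^{−γ} dτ = π t^{1−γ} ∑_{m=0}^{∞} (−1)^m (πt)^{2m} / Γ(2m+2−γ); this series representation equals (π t^{1−γ} / (2Γ(2−γ))) (₁F₁(1, 2−γ, iπt) + ₁F₁(1, 2−γ, −iπt)) in terms of Kummer's confluent hypergeometric function ₁F₁(α, β, z) = (Γ(β)/Γ(α)) ∑_{k∈ℕ} (Γ(α+k)/(Γ(β+k) k!)) z^k. -/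

import Mathlib

open Real

/-- Kummer's confluent hypergeometric function
₁F₁(a, b, z) = (Γ(b)/Γ(a)) ∑_{k∈ℕ} (Γ(a+k)/(Γ(b+k) k!)) z^k. -/
noncomputable def kummer (a b z : ℂ) : ℂ :=
  (Complex.Gamma b / Complex.Gamma a) *
    ∑' k : ℕ, Complex.Gamma (a + k) / (Complex.Gamma (b + k) * (k.factorial : ℂ)) * z ^ k

/-!
Expanding `π cos (π τ) = ∑ (-1)ᵐ π²ᵐ⁺¹ τ²ᵐ / (2m)!` and integrating term by term against the
weakly singular kernel `(t - τ)^(-γ)`, each term is a Beta integral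
`∫₀ᵗ τ²ᵐ (t - τ)^(-γ) dτ = (2m)! Γ(1-γ) / Γ(2m+2-γ) · t^(2m+1-γ)`. The interchange is justified by
absolute convergence: the kernel is nonnegative, so the norms of the terms integrate to the
absolute values of the resulting series, which `Γ(b + k) ≥ Γ(b) k!` (for `b ≥ 1`) dominates by an
exponential series. For the Kummer form, `₁F₁(1, b, z) = Γ(b) ∑ zᵏ / Γ(b + k)`, and adding
the values at `±iπt` kills the odd terms and leaves twice the even ones.
-/

open MeasureTheory Nat

theorem Real.Gamma_mul_factorial_le_Gamma_add {x : ℝ} (hx : 1 ≤ x) (n : ℕ) :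
    Gamma x * n ! ≤ Gamma (x + n) := by
  induction n with
  | zero => simp
  | succ n ih =>
    have hxn : 0 < x + n := by positivity
    calc Gamma x * (n + 1)! = (n + 1) * (Gamma x * n !) := by push_cast [factorial_succ]; ring
      _ ≤ (x + n) * Gamma (x + n) :=
        mul_le_mul (by linarith) ih (by have := Gamma_pos_of_pos (by linarith : 0 < x); positivity)
          hxn.le
      _ = Gamma (x + (n + 1 : ℕ)) := by
        rw [← Gamma_add_one hxn.ne']; push_cast; ring_nf

theorem Real.summable_pow_div_Gamma_add {b : ℝ} (hb : 1 ≤ b) (x : ℝ) :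
    Summable fun k : ℕ => x ^ k / Gamma (b + k) := by
  have hΓb : 0 < Gamma b := Gamma_pos_of_pos (by linarith)
  refine Summable.of_norm_bounded ((summable_pow_div_factorial |x|).div_const (Gamma b)) fun k => ?_
  rw [norm_div, norm_pow, norm_eq_abs, norm_eq_abs, abs_of_pos (Gamma_pos_of_pos (by positivity)),
    div_div]
  gcongr
  rw [mul_comm]
  exact Gamma_mul_factorial_le_Gamma_add hb k

theorem Complex.summable_inv_Gamma_add_mul_pow {b : ℝ} (hb : 1 ≤ b) (z : ℂ) :
    Summable fun k : ℕ => (Gamma (b + k))⁻¹ * z ^ k := by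
  refine .of_norm ((Real.summable_pow_div_Gamma_add hb ‖z‖).congr fun k => ?_)
  rw [norm_mul, norm_inv, norm_pow, ← ofReal_natCast, ← ofReal_add, Gamma_ofReal, norm_real,
    Real.norm_of_nonneg (Real.Gamma_pos_of_pos (by positivity)).le, inv_mul_eq_div]

theorem summable_abs_neg_one_pow_mul_pow_div_Gamma {γ : ℝ} (hγ : γ < 1) (r : ℝ) :
    Summable fun m : ℕ => |(-1 : ℝ) ^ m * r ^ (2 * m) / Gamma (2 * m + 2 - γ)| := by
  have h := (Real.summable_pow_div_Gamma_add (b := 2 - γ) (by linarith) |r|).comp_injective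
    (mul_right_injective₀ (two_ne_zero' ℕ))
  refine h.congr fun m => ?_
  have hΓ : 0 < Gamma (2 * m + 2 - γ) := Gamma_pos_of_pos (by
    have : (0 : ℝ) ≤ m := m.cast_nonneg
    linarith)
  rw [abs_div, abs_mul, abs_pow, abs_neg, abs_one, one_pow, one_mul, abs_pow, abs_of_pos hΓ]
  simp only [Function.comp_apply]
  push_cast
  ring_nf

theorem integral_rpow_mul_sub_rpow {a b t : ℝ} (ha : 0 < a) (hb : 0 < b) (ht : 0 < t) :
    ∫ τ in (0 : ℝ)..t, τ ^ (a - 1) * (t - τ) ^ (b - 1)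
      = Gamma a * Gamma b / Gamma (a + b) * t ^ (a + b - 1) := by
  have hΓ : Complex.Gamma (a + b) ≠ 0 :=
    Complex.Gamma_ne_zero_of_re_pos (by simpa using add_pos ha hb)
  have hβ :
      Complex.betaIntegral a b = Complex.Gamma a * Complex.Gamma b / Complex.Gamma (a + b) := by
    rw [Complex.Gamma_mul_Gamma_eq_betaIntegral (by simpa) (by simpa), mul_div_cancel_left₀ _ hΓ]
  apply Complex.ofReal_injective
  rw [← intervalIntegral.integral_ofReal]
  calc ∫ τ in (0 : ℝ)..t, ((τ ^ (a - 1) * (t - τ) ^ (b - 1) : ℝ) : ℂ)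
      = ∫ τ in (0 : ℝ)..t, (τ : ℂ) ^ ((a : ℂ) - 1) * ((t : ℂ) - τ) ^ ((b : ℂ) - 1) := by
        refine intervalIntegral.integral_congr fun τ hτ => ?_
        rw [Set.uIcc_of_le ht.le] at hτ
        push_cast [Complex.ofReal_cpow hτ.1, Complex.ofReal_cpow (sub_nonneg.2 hτ.2)]
        rfl
    _ = (t : ℂ) ^ ((a : ℂ) + b - 1) * Complex.betaIntegral a b := Complex.betaIntegral_scaled _ _ ht
    _ = _ := by
        rw [hβ]
        push_cast [Complex.ofReal_cpow ht.le, ← Complex.Gamma_ofReal]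
        ring

theorem integral_pow_mul_sub_rpow_neg {γ t : ℝ} (hγ : γ < 1) (ht : 0 < t) (n : ℕ) :
    ∫ τ in (0 : ℝ)..t, τ ^ n * (t - τ) ^ (-γ)
      = n ! * Gamma (1 - γ) / Gamma (n + 2 - γ) * t ^ (n + 1 - γ) := by
  have h := integral_rpow_mul_sub_rpow (a := n + 1) (b := 1 - γ) (by positivity) (by linarith) ht
  simp only [add_sub_cancel_right, sub_sub_cancel_left, rpow_natCast] at h
  rw [h, Gamma_nat_eq_factorial]
  ring_nf

theorem integral_tsum_mul_of_nonneg {α : Type*} [MeasurableSpace α] {μ : Measure α}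
    {c : ℕ → ℝ} {h : ℕ → α → ℝ} (h_nonneg : ∀ m, 0 ≤ᵐ[μ] h m)
    (h_int : ∀ m, Integrable (h m) μ) (h_sum : Summable fun m => |c m| * ∫ x, h m x ∂μ) :
    ∫ x, ∑' m, c m * h m x ∂μ = ∑' m, c m * ∫ x, h m x ∂μ := by
  have h_norm : ∀ m, ∫ x, ‖c m * h m x‖ ∂μ = |c m| * ∫ x, h m x ∂μ := fun m => by
    rw [← integral_const_mul]
    refine integral_congr_ae ((h_nonneg m).mono fun x hx => ?_)
    simp only [norm_mul, norm_eq_abs, abs_of_nonneg hx]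
  rw [← integral_tsum_of_summable_integral_norm (fun m => (h_int m).const_mul (c m))
    (h_sum.congr fun m => (h_norm m).symm)]
  simp_rw [integral_const_mul]

theorem integral_pi_mul_cos_mul_sub_rpow_eq_tsum {γ t : ℝ} (hγ : γ < 1) (ht : 0 < t) :
    1 / Gamma (1 - γ) * ∫ τ in (0 : ℝ)..t, π * cos (π * τ) * (t - τ) ^ (-γ)
      = π * t ^ (1 - γ) * ∑' m : ℕ, (-1 : ℝ) ^ m * (π * t) ^ (2 * m) / Gamma (2 * m + 2 - γ) := by
  set c : ℕ → ℝ := fun m => (-1) ^ m * π ^ (2 * m + 1) / (2 * m)!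
  set h : ℕ → ℝ → ℝ := fun m τ => τ ^ (2 * m) * (t - τ) ^ (-γ)
  set K := Gamma (1 - γ) * (π * t ^ (1 - γ))
  have hΓ : 0 < Gamma (1 - γ) := Gamma_pos_of_pos (by linarith)
  have hK : 0 < K := by positivity
  have h_term : ∀ m, c m * ∫ τ in Set.Ioc 0 t, h m τ
      = K * ((-1 : ℝ) ^ m * (π * t) ^ (2 * m) / Gamma (2 * m + 2 - γ)) := fun m => by
    rw [← intervalIntegral.integral_of_le ht.le, integral_pow_mul_sub_rpow_neg hγ ht]
    push_cast
    rw [show (2 * m + 1 - γ : ℝ) = (2 * m : ℕ) + (1 - γ) by push_cast; ring, rpow_add ht,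
      rpow_natCast]
    simp only [c, K]
    field_simp
    ring
  have h_nonneg : ∀ m, 0 ≤ᵐ[volume.restrict (Set.Ioc 0 t)] h m := fun m =>
    ae_restrict_of_forall_mem measurableSet_Ioc fun τ hτ =>
      mul_nonneg (pow_nonneg hτ.1.le _) (rpow_nonneg (sub_nonneg.2 hτ.2) _)
  have h_kernel : IntervalIntegrable (fun τ => (t - τ) ^ (-γ)) volume 0 t := by
    simpa using (intervalIntegral.intervalIntegrable_rpow' (r := -γ) (by linarith)
      (a := t) (b := 0)).comp_sub_left t
  have h_int : ∀ m, IntegrableOn (h m) (Set.Ioc 0 t) := fun m =>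
    (h_kernel.continuousOn_mul (continuous_pow _).continuousOn).1
  have h_sum : Summable fun m => |c m| * ∫ τ in Set.Ioc 0 t, h m τ := by
    refine ((summable_abs_neg_one_pow_mul_pow_div_Gamma hγ (π * t)).mul_left K).congr fun m => ?_
    rw [← abs_of_nonneg (integral_nonneg_of_ae (h_nonneg m)), ← abs_mul, h_term, abs_mul,
      abs_of_pos hK]
  have h_cos : ∀ τ, π * cos (π * τ) * (t - τ) ^ (-γ) = ∑' m, c m * h m τ := fun τ => by
    rw [cos_eq_tsum, ← tsum_mul_left, ← tsum_mul_right]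
    congr 1 with m
    simp only [c, h, mul_pow]
    ring
  rw [intervalIntegral.integral_of_le ht.le, funext h_cos,
    integral_tsum_mul_of_nonneg h_nonneg h_int h_sum, tsum_congr h_term, tsum_mul_left]
  simp only [K]
  field_simp

theorem HasSum.two_mul_even_of_add_neg_pow {R : Type*} [Ring R] [TopologicalSpace R]
    [ContinuousAdd R] {g : ℕ → R} {z A B : R} (hA : HasSum (fun k => g k * z ^ k) A)
    (hB : HasSum (fun k => g k * (-z) ^ k) B) :
    HasSum (fun m => 2 * (g (2 * m) * z ^ (2 * m))) (A + B) := by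
  have h := hA.add hB
  rw [← (mul_right_injective₀ (two_ne_zero' ℕ)).hasSum_iff] at h
  · convert h using 2 with m
    simp [two_mul]
  · rintro k hk
    obtain ⟨m, rfl⟩ : Odd k := Nat.not_even_iff_odd.1 fun ⟨m, hm⟩ => hk ⟨m, by simp only; omega⟩
    simp [Odd.neg_pow ⟨m, rfl⟩]

theorem kummer_one_left (b z : ℂ) :
    kummer 1 b z = Complex.Gamma b * ∑' k : ℕ, (Complex.Gamma (b + k))⁻¹ * z ^ k := by
  rw [kummer, Complex.Gamma_one, div_one]
  congr 1
  refine tsum_congr fun k => ?_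
  rw [add_comm, Complex.Gamma_nat_eq_factorial, mul_comm (Complex.Gamma _), ← div_div,
    div_self (by exact_mod_cast k.factorial_ne_zero), one_div]

theorem kummer_one_add_kummer_one_neg {γ : ℝ} (hγ : γ < 1) (r : ℝ) :
    kummer 1 (2 - γ) (r * Complex.I) + kummer 1 (2 - γ) (-(r * Complex.I))
      = 2 * Complex.Gamma (2 - γ) *
          ((∑' m : ℕ, (-1 : ℝ) ^ m * r ^ (2 * m) / Gamma (2 * m + 2 - γ) : ℝ) : ℂ) := by
  have hb : (2 - γ : ℂ) = ((2 - γ : ℝ) : ℂ) := by push_cast; rfl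
  have h_sum (z : ℂ) :=
    (Complex.summable_inv_Gamma_add_mul_pow (b := 2 - γ) (by linarith) z).hasSum
  have h_even := (h_sum (r * Complex.I)).two_mul_even_of_add_neg_pow (h_sum (-(r * Complex.I)))
  have h_real := Complex.hasSum_ofReal.2
    (((summable_abs_neg_one_pow_mul_pow_div_Gamma hγ r).of_abs.hasSum).mul_left 2)
  rw [hb, kummer_one_left, kummer_one_left, ← mul_add, h_even.unique (h_real.congr_fun ?_)]
  · push_cast
    ring
  · intro m
    rw [pow_mul, mul_pow, Complex.I_sq, ← Complex.ofReal_natCast, ← Complex.ofReal_add,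
      Complex.Gamma_ofReal]
    push_cast
    ring_nf

theorem caputo_deriv_sin_pi_general (γ t : ℝ) (hγ1 : γ < 1) (ht : 0 < t) :
    Summable (fun m : ℕ => |(-1 : ℝ) ^ m * (π * t) ^ (2 * m) / Real.Gamma (2 * m + 2 - γ)|) ∧
    (1 / Real.Gamma (1 - γ)) * (∫ τ in (0:ℝ)..t, π * Real.cos (π * τ) * (t - τ) ^ (-γ))
      = π * t ^ (1 - γ) *
          ∑' m : ℕ, (-1 : ℝ) ^ m * (π * t) ^ (2 * m) / Real.Gamma (2 * m + 2 - γ) ∧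
    ((π * t ^ (1 - γ) : ℝ) : ℂ) / (2 * Complex.Gamma (2 - γ)) *
        (kummer 1 (2 - γ) ((π : ℂ) * t * Complex.I)
          + kummer 1 (2 - γ) (-((π : ℂ) * t * Complex.I)))
      = ((π * t ^ (1 - γ) *
          ∑' m : ℕ, (-1 : ℝ) ^ m * (π * t) ^ (2 * m) / Real.Gamma (2 * m + 2 - γ) : ℝ) : ℂ) := by
  refine ⟨summable_abs_neg_one_pow_mul_pow_div_Gamma hγ1 (π * t),
    integral_pi_mul_cos_mul_sub_rpow_eq_tsum hγ1 ht, ?_⟩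
  have hΓ : Complex.Gamma (2 - γ) ≠ 0 :=
    Complex.Gamma_ne_zero_of_re_pos (by simpa using hγ1.trans one_lt_two)
  have h := kummer_one_add_kummer_one_neg hγ1 (π * t)
  push_cast at h ⊢
  rw [h]
  field_simp

/-- The Caputo fractional derivative of order γ of sin(πt) is given by an
absolutely convergent power series, which equals
(π t^{1−γ} / (2Γ(2−γ))) (₁F₁(1, 2−γ, iπt) + ₁F₁(1, 2−γ, −iπt)). -/
theorem caputo_deriv_sin_pi (γ t : ℝ) (hγ0 : 0 < γ) (hγ1 : γ < 1) (ht : 0 < t) :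
    Summable (fun m : ℕ => |(-1 : ℝ) ^ m * (π * t) ^ (2 * m) / Real.Gamma (2 * m + 2 - γ)|) ∧
    (1 / Real.Gamma (1 - γ)) * (∫ τ in (0:ℝ)..t, π * Real.cos (π * τ) * (t - τ) ^ (-γ))
      = π * t ^ (1 - γ) *
          ∑' m : ℕ, (-1 : ℝ) ^ m * (π * t) ^ (2 * m) / Real.Gamma (2 * m + 2 - γ) ∧
    ((π * t ^ (1 - γ) : ℝ) : ℂ) / (2 * Complex.Gamma (2 - γ)) *
        (kummer 1 (2 - γ) ((π : ℂ) * t * Complex.I)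
          + kummer 1 (2 - γ) (-((π : ℂ) * t * Complex.I)))
      = ((π * t ^ (1 - γ) *
          ∑' m : ℕ, (-1 : ℝ) ^ m * (π * t) ^ (2 * m) / Real.Gamma (2 * m + 2 - γ) : ℝ) : ℂ) :=
  caputo_deriv_sin_pi_general γ t hγ1 ht
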